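/- Let α ∈ (0,1) and let X be a real-valued random variable on a probability space (Ω,𝒜,P) with E[X⁻] < ∞. Then P[X ≤ x_{(α)}] = α or P[X < x_{(α)}] = 0 holds if and only if ES_α(X) = TCE_α(X). -/

import Mathlib

open MeasureTheory ProbabilityTheory Filter
open scoped Classical

noncomputable section

variable {Ω : Type*} [MeasurableSpace Ω]

/-- Lower α-quantile: inf {x | P[X ≤ x] ≥ α}. -/
def lowerQuantile (P : Measure Ω) (X : Ω → ℝ) (α : ℝ) : ℝ :=
  sInf {x : ℝ | α ≤ (P {ω | X ω ≤ x}).toReal}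

/-- Upper α-quantile: inf {x | P[X ≤ x] > α}. -/
def upperQuantile (P : Measure Ω) (X : Ω → ℝ) (α : ℝ) : ℝ :=
  sInf {x : ℝ | α < (P {ω | X ω ≤ x}).toReal}

/-- α-tail mean. -/
def tailMean (P : Measure Ω) (X : Ω → ℝ) (α : ℝ) : ℝ :=
  α⁻¹ * ((∫ ω in {ω | X ω ≤ lowerQuantile P X α}, X ω ∂P)
    + lowerQuantile P X α * (α - (P {ω | X ω ≤ lowerQuantile P X α}).toReal))

/-- Expected Shortfall. -/
def ES (P : Measure Ω) (X : Ω → ℝ) (α : ℝ) : ℝ := - tailMean P X α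

/-- Conditional expectation given an event: E[X | A] = E[X·1_A] / P[A]. -/
def condExpEvent (P : Measure Ω) (X : Ω → ℝ) (A : Set Ω) : ℝ :=
  (∫ ω in A, X ω ∂P) / (P A).toReal

/-- Lower tail conditional expectation. -/
def TCElow (P : Measure Ω) (X : Ω → ℝ) (α : ℝ) : ℝ :=
  - condExpEvent P X {ω | X ω ≤ lowerQuantile P X α}

/-- Upper tail conditional expectation. -/
def TCEup (P : Measure Ω) (X : Ω → ℝ) (α : ℝ) : ℝ :=
  - condExpEvent P X {ω | X ω ≤ upperQuantile P X α}

/-- Worst conditional expectation. -/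
def WCE (P : Measure Ω) (X : Ω → ℝ) (α : ℝ) : ℝ :=
  - sInf {y : ℝ | ∃ A : Set Ω, MeasurableSet A ∧ α < (P A).toReal ∧ y = condExpEvent P X A}

/-- Conditional value-at-risk. -/
def CVaR (P : Measure Ω) (X : Ω → ℝ) (α : ℝ) : ℝ :=
  sInf {y : ℝ | ∃ s : ℝ, y = (∫ ω, max (-(X ω - s)) 0 ∂P) / α - s}

/-- Modified indicator 1^{(α)}_{X ≤ x}. -/
def modInd (P : Measure Ω) (X : Ω → ℝ) (α x : ℝ) (ω : Ω) : ℝ :=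
  if P {a | X a = x} = 0 then Set.indicator {a | X a ≤ x} (fun _ => (1 : ℝ)) ω
  else Set.indicator {a | X a ≤ x} (fun _ => (1 : ℝ)) ω
    + ((α - (P {a | X a ≤ x}).toReal) / (P {a | X a = x}).toReal)
      * Set.indicator {a | X a = x} (fun _ => (1 : ℝ)) ω

/-- Sum of the k smallest entries of (X 0 ω, ..., X (n-1) ω). -/
def tailSum (Xs : ℕ → Ω → ℝ) (n k : ℕ) (ω : Ω) : ℝ :=
  ((List.insertionSort (· ≤ ·) (List.ofFn fun i : Fin n => Xs i ω)).take k).sum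

/-! Write `q = x_(α)`, `A = {X ≤ q}` and `p = P[A]`. Right-continuity of the distribution
function gives `α ≤ p`, so `p > 0`, and clearing denominators turns `ES_α(X) = TCE_α(X)` into
`(p - α) (E[X 1_A] - p q) = 0`. As `X ≤ q` on `A`, the second factor vanishes iff `X = q`
a.s. on `A`, that is, iff `P[X < q] = 0`. -/

open Set Topology

theorem StieltjesFunction.le_apply_sInf_setOf_le_apply {R : Type*}
    [ConditionallyCompleteLinearOrder R] [TopologicalSpace R] [OrderTopology R]
    [DenselyOrdered R] [NoMaxOrder R] (f : StieltjesFunction R) {α : ℝ} (hne : ∃ x, α ≤ f x) :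
    α ≤ f (sInf {x | α ≤ f x}) := by
  set q := sInf {x | α ≤ f x}
  have hlim : Tendsto f (𝓝[>] q) (𝓝 (f q)) :=
    continuousWithinAt_Ioi_iff_Ici.mpr (f.right_continuous q)
  refine ge_of_tendsto hlim (eventually_nhdsWithin_of_forall fun y hy => ?_)
  obtain ⟨s, hs, hsy⟩ := exists_lt_of_csInf_lt hne hy
  exact le_trans hs (f.mono hsy.le)

theorem measureReal_setOf_le_eq_cdf_map {P : Measure Ω} [IsProbabilityMeasure P] {X : Ω → ℝ}
    (hX : AEMeasurable X P) (x : ℝ) : P.real {ω | X ω ≤ x} = cdf (P.map X) x := by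
  have := Measure.isProbabilityMeasure_map (μ := P) hX
  rw [cdf_eq_real, measureReal_def, measureReal_def, Measure.map_apply_of_aemeasurable hX
    measurableSet_Iic]
  rfl

theorem le_measureReal_setOf_le_lowerQuantile {P : Measure Ω} [IsProbabilityMeasure P]
    {X : Ω → ℝ} (hX : AEMeasurable X P) {α : ℝ} (hα : α < 1) :
    α ≤ P.real {ω | X ω ≤ lowerQuantile P X α} := by
  have hcdf := measureReal_setOf_le_eq_cdf_map hX
  simp only [lowerQuantile, ← measureReal_def, hcdf]
  have := Measure.isProbabilityMeasure_map (μ := P) hX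
  exact (cdf (P.map X)).le_apply_sInf_setOf_le_apply
    (((tendsto_cdf_atTop _).eventually_const_lt hα).exists.imp fun _ => le_of_lt)

theorem integrableOn_setOf_le_of_integrable_negPart {μ : Measure Ω} [IsFiniteMeasure μ]
    {X : Ω → ℝ} (hX : Measurable X) (hneg : Integrable (fun ω => max (-X ω) 0) μ) (c : ℝ) :
    IntegrableOn X {ω | X ω ≤ c} μ := by
  refine Integrable.mono' (g := fun ω => max (-X ω) 0 + |c|)
    (hneg.restrict.add (integrable_const _)) hX.aestronglyMeasurable.restrict ?_
  refine (ae_restrict_iff' (measurableSet_le hX measurable_const)).mpr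
    (Eventually.of_forall fun ω (hω : X ω ≤ c) => ?_)
  rw [Real.norm_eq_abs, abs_le]
  constructor <;> linarith [le_max_left (-X ω) 0, le_max_right (-X ω) 0, le_abs_self c,
    abs_nonneg c]

theorem setIntegral_setOf_le_eq_measureReal_mul_iff {μ : Measure Ω} [IsFiniteMeasure μ]
    {X : Ω → ℝ} (hX : Measurable X) {c : ℝ} (hint : IntegrableOn X {ω | X ω ≤ c} μ) :
    ∫ ω in {ω | X ω ≤ c}, X ω ∂μ = μ.real {ω | X ω ≤ c} * c ↔ μ {ω | X ω < c} = 0 := by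
  have hA : MeasurableSet {ω | X ω ≤ c} := measurableSet_le hX measurable_const
  have hgap : ∫ ω in {ω | X ω ≤ c}, (c - X ω) ∂μ = μ.real {ω | X ω ≤ c} * c
      - ∫ ω in {ω | X ω ≤ c}, X ω ∂μ := by
    rw [integral_sub (integrable_const c) hint, setIntegral_const, smul_eq_mul]
  have hgap_nonneg : 0 ≤ᵐ[μ.restrict {ω | X ω ≤ c}] fun ω => c - X ω :=
    (ae_restrict_iff' hA).mpr (Eventually.of_forall fun ω (hω : X ω ≤ c) => sub_nonneg.mpr hω)
  have hzero := setIntegral_eq_zero_iff_of_nonneg_ae hgap_nonneg ((integrable_const c).sub hint)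
  rw [hgap, sub_eq_zero, eq_comm, EventuallyEq, ae_restrict_iff' hA, ae_iff] at hzero
  rw [hzero]
  congr! 2
  ext ω
  simp only [mem_ofPred_eq, Pi.zero_apply, sub_eq_zero, Classical.not_imp]
  exact ⟨fun ⟨hle, hne⟩ => lt_of_le_of_ne hle (Ne.symm hne), fun h => ⟨h.le, h.ne'⟩⟩

theorem inv_mul_add_mul_sub_eq_div_iff {a p I q : ℝ} (ha : a ≠ 0) (hp : p ≠ 0) :
    a⁻¹ * (I + q * (a - p)) = I / p ↔ p = a ∨ I = p * q := by
  rw [inv_mul_eq_div, div_eq_div_iff ha hp]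
  constructor
  · intro h
    have : (p - a) * (I - p * q) = 0 := by linear_combination h
    rcases mul_eq_zero.mp this with h | h
    · exact Or.inl (sub_eq_zero.mp h)
    · exact Or.inr (sub_eq_zero.mp h)
  · rintro (rfl | h)
    · ring
    · rw [h]; ring

/-- ES_α = TCE_α iff P[X ≤ x_(α)] = α or P[X < x_(α)] = 0. -/
theorem es_eq_tcelow_iff (P : Measure Ω) [IsProbabilityMeasure P] (α : ℝ)
    (hα : α ∈ Set.Ioo (0:ℝ) 1)
    (X : Ω → ℝ) (hX : Measurable X)
    (hXint : Integrable (fun ω => max (-(X ω)) 0) P) :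
    ((P {ω | X ω ≤ lowerQuantile P X α}).toReal = α ∨
      P {ω | X ω < lowerQuantile P X α} = 0) ↔
    ES P X α = TCElow P X α := by
  obtain ⟨hα0, hα1⟩ := hα
  have hαp := le_measureReal_setOf_le_lowerQuantile (P := P) hX.aemeasurable hα1
  have hint := integrableOn_setOf_le_of_integrable_negPart hX hXint (lowerQuantile P X α)
  rw [ES, TCElow, tailMean, condExpEvent, neg_inj, ← measureReal_def (μ := P),
    inv_mul_add_mul_sub_eq_div_iff hα0.ne' (hα0.trans_le hαp).ne',
    setIntegral_setOf_le_eq_measureReal_mul_iff hX hint]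

end
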